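/- arXiv:1702.02689 — 2 statements merged into one kernel-verified Lean document; each statement's English description precedes it below -/
import Mathlib

section
/- Let n ≥ 3, N = ⌊n/2⌋, and 1 ≤ i ≤ N. The N+1 real numbers cos(2πij/n) for j = 0, 1, …, N are pairwise distinct if and only if gcd(i, n) = 1. -/
/-!
The equation cos(2πij/n) = cos(2πik/n) holds exactly when n divides i(j - k) or i(j + k).
If i is coprime to n this forces n ∣ j - k or n ∣ j + k, which for 0 ≤ j, k ≤ n/2 means j = k.
Otherwise d = gcd(i, n) ≥ 2, and j = n/d is a nonzero index in range with n ∣ ij, so its cosine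
equals the one at j = 0.
-/

open Real

theorem two_pi_mul_div_eq_add_iff {n : ℕ} (hn : n ≠ 0) (a b m : ℤ) :
    2 * π * a / n = 2 * m * π + 2 * π * b / n ↔ a - b = n * m := by
  have hn' : (n : ℝ) ≠ 0 := by exact_mod_cast hn
  have hfactor : 2 * π * a / n - (2 * m * π + 2 * π * b / n)
      = 2 * π / n * ((a - b : ℤ) - (n * m : ℤ) : ℝ) := by
    push_cast
    field_simp
    ring
  rw [← sub_eq_zero, hfactor, mul_eq_zero, or_iff_right (div_ne_zero (by positivity) hn'),
    sub_eq_zero, Int.cast_inj]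

theorem cos_two_pi_mul_div_eq_cos_iff {n : ℕ} (hn : n ≠ 0) (a b : ℤ) :
    cos (2 * π * a / n) = cos (2 * π * b / n) ↔ (n : ℤ) ∣ a - b ∨ (n : ℤ) ∣ a + b := by
  have hminus (m : ℤ) : 2 * π * a / n = 2 * m * π - 2 * π * b / n ↔ a + b = n * m := by
    simpa [sub_eq_add_neg, mul_neg, neg_div] using two_pi_mul_div_eq_add_iff hn a (-b) m
  rw [eq_comm]
  simp only [cos_eq_cos_iff, two_pi_mul_div_eq_add_iff hn, hminus, exists_or, Dvd.dvd]

theorem eq_of_dvd_sub_or_dvd_add {n j k : ℕ} (hj : j ≤ n / 2) (hk : k ≤ n / 2)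
    (h : (n : ℤ) ∣ j - k ∨ (n : ℤ) ∣ j + k) : j = k := by
  rcases Nat.eq_zero_or_pos n with rfl | hn
  · omega
  rcases h with hsub | hadd
  · have : (j : ℤ) - k = 0 :=
      Int.eq_zero_of_abs_lt_dvd hsub (abs_sub_lt_iff.mpr ⟨by omega, by omega⟩)
    omega
  · obtain ⟨c, hc⟩ := Int.natCast_dvd_natCast.mp (by exact_mod_cast hadd)
    rcases Nat.lt_or_ge c 2 with hc2 | hc2
    · interval_cases c <;> omega
    · have := Nat.mul_le_mul_left n hc2
      omega

theorem exists_pos_le_half_dvd_mul_of_not_coprime {i n : ℕ} (hn : n ≠ 0) (h : ¬ i.Coprime n) :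
    ∃ j, 0 < j ∧ j ≤ n / 2 ∧ n ∣ i * j := by
  have hgcd : 2 ≤ i.gcd n := by
    have := Nat.gcd_pos_of_pos_right i (Nat.pos_of_ne_zero hn)
    unfold Nat.Coprime at h
    omega
  refine ⟨n / i.gcd n, Nat.div_pos (Nat.gcd_le_right i (by omega)) (by omega),
    Nat.div_le_div_left hgcd (by norm_num), ?_⟩
  conv_lhs => rw [← Nat.mul_div_cancel' (Nat.gcd_dvd_right i n)]
  exact mul_dvd_mul_right (Nat.gcd_dvd_left i n) _

theorem cos_distinct_iff_coprime_general (n : ℕ) (hn : 3 ≤ n) (i : ℕ) :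
    (∀ j k : Fin (n / 2 + 1),
        Real.cos (2 * Real.pi * i * j.val / n) = Real.cos (2 * Real.pi * i * k.val / n)
          → j = k)
      ↔ Nat.Coprime i n := by
  have hcos (j k : ℕ) : cos (2 * π * i * j / n) = cos (2 * π * i * k / n) ↔
      (n : ℤ) ∣ i * (j - k) ∨ (n : ℤ) ∣ i * (j + k) := by
    have := cos_two_pi_mul_div_eq_cos_iff (by omega : n ≠ 0) (i * j) (i * k)
    push_cast at this
    simpa only [mul_sub, mul_add, mul_assoc] using this
  constructor
  · intro hinj
    by_contra hcop
    obtain ⟨j, hj0, hjn, hdvd⟩ := exists_pos_le_half_dvd_mul_of_not_coprime (by omega) hcop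
    have hcoll := hinj ⟨j, by omega⟩ ⟨0, by omega⟩
      ((hcos j 0).mpr (.inl (by simpa using Int.natCast_dvd_natCast.mpr hdvd)))
    exact hj0.ne' (congrArg Fin.val hcoll)
  · intro hcop j k hjk
    have hcop' : IsCoprime (n : ℤ) i := Nat.isCoprime_iff_coprime.mpr hcop.symm
    exact Fin.ext (eq_of_dvd_sub_or_dvd_add (by omega) (by omega)
      (((hcos j k).mp hjk).imp hcop'.dvd_of_dvd_mul_left hcop'.dvd_of_dvd_mul_left))

theorem cos_distinct_iff_coprime (n : ℕ) (hn : 3 ≤ n) (i : ℕ)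
    (hi : 1 ≤ i) (hi' : i ≤ n / 2) :
    (∀ j k : Fin (n / 2 + 1),
        Real.cos (2 * Real.pi * i * j.val / n) = Real.cos (2 * Real.pi * i * k.val / n)
          → j = k)
      ↔ Nat.Coprime i n :=
  cos_distinct_iff_coprime_general n hn i
end

section
/- Let n be odd, N = (n-1)/2, and V the N×N DST matrix [V]_{j,k} = (2/(i√n))·sin(2πjk/n). For 1 ≤ m ≤ N, define the real symmetric matrix T_m by [T_m]_{j,k} = x_{m,j-k} - x_{m,j+k}, where x_{m,a} = 1 if a ≡ ±m (mod n) and 0 otherwise, and let D_m = 2·diag(cos(2πm/n), cos(4πm/n), …, cos(2πNm/n)). Then T_m = V·D_m·V*. -/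
/-- The `N × N` DST matrix, with entries `(2/(i√n))·sin(2πjk/n)` for `1 ≤ j, k ≤ N`. -/
noncomputable def dstMatrix (n N : ℕ) : Matrix (Fin N) (Fin N) ℂ :=
  fun j k => (2 / (Complex.I * Real.sqrt n)) *
    Real.sin (2 * Real.pi * (j.val + 1) * (k.val + 1) / n)

/-- `x_{m,a} = 1` if `a ≡ ±m (mod n)`, and `0` otherwise. -/
def xInd (n : ℕ) (m : ℕ) (a : ℤ) : ℂ :=
  if (a : ZMod n) = (m : ZMod n) ∨ (a : ZMod n) = -(m : ZMod n) then 1 else 0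

/-- The matrix `T_m` with `[T_m]_{j,k} = x_{m,j-k} - x_{m,j+k}`, indices `1 ≤ j,k ≤ N`. -/
def Tmat (n N m : ℕ) : Matrix (Fin N) (Fin N) ℂ :=
  fun j k => xInd n m ((j.val : ℤ) + 1 - ((k.val : ℤ) + 1))
    - xInd n m ((j.val : ℤ) + 1 + ((k.val : ℤ) + 1))

/-- `D_m = 2·diag(cos(2πm/n), …, cos(2πNm/n))`. -/
noncomputable def Dmat (n N m : ℕ) : Matrix (Fin N) (Fin N) ℂ :=
  Matrix.diagonal fun j => 2 * (Real.cos (2 * Real.pi * m * (j.val + 1) / n) : ℂ)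

/-
Entrywise, `(V D_m V*)_{jk} = (4/n) ∑_l sin(θ j l) · 2 cos(θ m l) · sin(θ k l)` with `θ = 2π/n`.
Product-to-sum turns the summand into four cosines of frequencies `j - k ∓ m` and `j + k ∓ m`.
For `n = 2N + 1` the symmetry `l ↦ n - l` makes `∑_{l=1}^N 2 cos(2π a l/n)` equal to the full
character sum `∑_{l=0}^{n-1} e^{2πi a l/n} = n·[n ∣ a]` minus its `l = 0` term, so the four `-1`s
cancel and what is left are the indicators of `j - k ≡ ±m` and `j + k ≡ ±m`, i.e.
`x_{m,j-k} - x_{m,j+k}`; the two indicators in each `x_{m,a}` never overlap because `0 < 2m < n`.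
-/

open Real Finset

theorem sum_range_cos_two_pi_int_mul_div (n : ℕ) (hn : n ≠ 0) (a : ℤ) :
    ∑ l ∈ range n, cos (2 * π * a * l / n) = if (n : ℤ) ∣ a then (n : ℝ) else 0 := by
  have hζ := Complex.isPrimitiveRoot_exp n hn
  set z := Complex.exp (2 * π * Complex.I / n) ^ a
  have hterm (l : ℕ) : cos (2 * π * a * l / n) = (z ^ l).re := by
    rw [← zpow_natCast, ← zpow_mul, ← Complex.exp_int_mul, ← Complex.exp_ofReal_mul_I_re]
    congr 2
    push_cast
    ring
  simp only [hterm, ← Complex.re_sum]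
  split_ifs with ha
  · simp [z, (hζ.zpow_eq_one_iff_dvd a).2 ha]
  · have hzn : z ^ n = 1 := by
      rw [← zpow_natCast, ← zpow_mul, mul_comm a, zpow_mul, zpow_natCast, hζ.pow_eq_one, one_zpow]
    rw [geom_sum_eq (mt (hζ.zpow_eq_one_iff_dvd a).1 ha), hzn]
    simp

theorem sum_range_two_mul_cos_of_eq_two_mul_add_one (n N : ℕ) (hn : n = 2 * N + 1) (a : ℤ) :
    ∑ l ∈ range N, 2 * cos (2 * π * a * (l + 1) / n)
      = (if (n : ℤ) ∣ a then (n : ℝ) else 0) - 1 := by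
  have hn0 : (n : ℝ) ≠ 0 := by rw [hn]; positivity
  have hsym (x : ℝ) : cos (2 * π * a * (n - x) / n) = cos (2 * π * a * x / n) := by
    rw [← cos_int_mul_two_pi_sub _ a]
    congr 1
    field_simp
    ring
  have hupper : ∑ l ∈ range N, cos (2 * π * a * (N + l + 1 : ℕ) / n)
      = ∑ l ∈ range N, cos (2 * π * a * (l + 1) / n) := by
    rw [← sum_range_reflect (fun l : ℕ => cos (2 * π * a * (l + 1) / n))]
    refine sum_congr rfl fun l hl => ?_
    rw [← hsym]
    congr 3
    rw [mem_range] at hl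
    rw [Nat.cast_sub (by omega), Nat.cast_sub (by omega)]
    push_cast [hn]
    ring
  have hfull := sum_range_cos_two_pi_int_mul_div n (by omega) a
  rw [show range n = range (N + N + 1) by rw [hn, two_mul], sum_range_succ', sum_range_add,
    hupper] at hfull
  push_cast at hfull
  rw [← hfull, ← mul_sum]
  simp
  ring

theorem four_mul_sin_mul_cos_mul_sin (x y z : ℝ) :
    4 * (sin x * cos z * sin y)
      = cos (x - y - z) + cos (x - y + z) - cos (x + y - z) - cos (x + y + z) := by
  simp only [cos_add, cos_sub, sin_add, sin_sub]
  ring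

theorem dstMatrix_mul_diagonal_mul_conjTranspose_apply (n N : ℕ) (d : Fin N → ℝ) (j k : Fin N) :
    (dstMatrix n N * Matrix.diagonal (fun l => (d l : ℂ)) * (dstMatrix n N).conjTranspose) j k
      = ((4 / n * ∑ l, sin (2 * π * (j.val + 1) * (l.val + 1) / n) * d l
          * sin (2 * π * (k.val + 1) * (l.val + 1) / n) : ℝ) : ℂ) := by
  rw [Matrix.mul_apply]
  simp only [Matrix.mul_diagonal, Matrix.conjTranspose_apply, RCLike.star_def, dstMatrix, map_mul,
    Complex.conj_ofReal]
  have hcoeff : 2 / (Complex.I * Real.sqrt n) * starRingEnd ℂ (2 / (Complex.I * Real.sqrt n))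
      = 4 / n := by
    rw [map_div₀, map_mul, map_ofNat, Complex.conj_I, Complex.conj_ofReal, div_mul_div_comm]
    have hsq : ((Real.sqrt n : ℝ) : ℂ) * Real.sqrt n = n := by
      exact_mod_cast Real.mul_self_sqrt (Nat.cast_nonneg n)
    congr 1
    · norm_num
    · linear_combination (-(((Real.sqrt n : ℝ) : ℂ) * Real.sqrt n)) * Complex.I_mul_I + hsq
  push_cast
  rw [mul_sum, ← hcoeff]
  refine sum_congr rfl fun l _ => ?_
  ring

theorem xInd_eq_ite_add_ite (n m : ℕ) (hm : 0 < m) (hmn : 2 * m < n) (a : ℤ) :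
    xInd n m a = (if (n : ℤ) ∣ a - m then 1 else 0) + (if (n : ℤ) ∣ a + m then 1 else 0) := by
  have hminus : (a : ZMod n) = m ↔ (n : ℤ) ∣ a - m := by
    rw [← ZMod.intCast_zmod_eq_zero_iff_dvd, Int.cast_sub, sub_eq_zero, Int.cast_natCast]
  have hplus : (a : ZMod n) = -(m : ZMod n) ↔ (n : ℤ) ∣ a + m := by
    rw [← ZMod.intCast_zmod_eq_zero_iff_dvd, Int.cast_add, add_eq_zero_iff_eq_neg, Int.cast_natCast]
  have hexcl : ¬((n : ℤ) ∣ a - m ∧ (n : ℤ) ∣ a + m) := fun ⟨h₁, h₂⟩ => by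
    have h2m : (n : ℤ) ∣ 2 * m := by simpa [two_mul] using dvd_sub h₂ h₁
    have := Int.le_of_dvd (by omega) h2m
    omega
  simp only [xInd, hminus, hplus]
  by_cases h₁ : (n : ℤ) ∣ a - m <;> by_cases h₂ : (n : ℤ) ∣ a + m <;> simp_all

theorem sum_sin_mul_cos_mul_sin_eq_xInd_sub_xInd (n N m : ℕ) (hn : n = 2 * N + 1)
    (hm : 0 < m) (hmN : m ≤ N) (A B : ℤ) :
    ((4 / n * ∑ l : Fin N, sin (2 * π * A * (l.val + 1) / n)
        * (2 * cos (2 * π * m * (l.val + 1) / n)) * sin (2 * π * B * (l.val + 1) / n) : ℝ) : ℂ)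
      = xInd n m (A - B) - xInd n m (A + B) := by
  have hsum : ∑ l : Fin N, sin (2 * π * A * (l.val + 1) / n)
        * (2 * cos (2 * π * m * (l.val + 1) / n)) * sin (2 * π * B * (l.val + 1) / n)
      = 1 / 4 * ((∑ l ∈ range N, 2 * cos (2 * π * (A - B - m : ℤ) * (l + 1) / n)
          + ∑ l ∈ range N, 2 * cos (2 * π * (A - B + m : ℤ) * (l + 1) / n))
          - ∑ l ∈ range N, 2 * cos (2 * π * (A + B - m : ℤ) * (l + 1) / n)
          - ∑ l ∈ range N, 2 * cos (2 * π * (A + B + m : ℤ) * (l + 1) / n)) := by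
    rw [Fin.sum_univ_eq_sum_range (fun l => sin (2 * π * A * (l + 1) / n)
      * (2 * cos (2 * π * m * (l + 1) / n)) * sin (2 * π * B * (l + 1) / n)),
      ← sum_add_distrib, ← sum_sub_distrib, ← sum_sub_distrib, mul_sum]
    refine sum_congr rfl fun l _ => ?_
    have h := four_mul_sin_mul_cos_mul_sin (2 * π * A * (l + 1) / n) (2 * π * B * (l + 1) / n)
      (2 * π * m * (l + 1) / n)
    push_cast
    ring_nf at h ⊢
    linarith
  have hn0 : (n : ℂ) ≠ 0 := by rw [hn]; norm_cast
  rw [hsum]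
  simp only [sum_range_two_mul_cos_of_eq_two_mul_add_one n N hn]
  rw [xInd_eq_ite_add_ite n m hm (by omega), xInd_eq_ite_add_ite n m hm (by omega)]
  split_ifs <;> push_cast <;> field_simp <;> ring

theorem Tmat_eq_VDV_general (n : ℕ) (hodd : Odd n) (m : ℕ)
    (hm : 1 ≤ m) (hm' : m ≤ (n - 1) / 2) :
    Tmat n ((n - 1) / 2) m
      = dstMatrix n ((n - 1) / 2) * Dmat n ((n - 1) / 2) m
          * (dstMatrix n ((n - 1) / 2)).conjTranspose := by
  obtain ⟨N, hN⟩ := hodd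
  rw [show (n - 1) / 2 = N by omega] at hm' ⊢
  have hD : Dmat n N m
      = Matrix.diagonal fun l => ((2 * cos (2 * π * m * (l.val + 1) / n) : ℝ) : ℂ) := by
    simp [Dmat]
  ext j k
  rw [hD, dstMatrix_mul_diagonal_mul_conjTranspose_apply, Tmat]
  have h := sum_sin_mul_cos_mul_sin_eq_xInd_sub_xInd n N m hN hm hm' (j.val + 1) (k.val + 1)
  simp only [Int.cast_add, Int.cast_natCast, Int.cast_one] at h
  exact h.symm

theorem Tmat_eq_VDV (n : ℕ) (hodd : Odd n) (hn : 3 ≤ n) (m : ℕ)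
    (hm : 1 ≤ m) (hm' : m ≤ (n - 1) / 2) :
    Tmat n ((n - 1) / 2) m
      = dstMatrix n ((n - 1) / 2) * Dmat n ((n - 1) / 2) m
          * (dstMatrix n ((n - 1) / 2)).conjTranspose :=
  Tmat_eq_VDV_general n hodd m hm hm'
end
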